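/- arXiv:2404.03773 — 2 statements merged into one kernel-verified Lean document; each statement's English description precedes it below -/
import Mathlib

section
/- Let α ∈ (0, π/8], v > 0 and R₀ > 0, and set d₂ = (sin(α/2) + tan α)·cos α / cos(2α). Let β : [0,∞) → ℝ be a continuous function with |β_t| < α/2 for all t ≥ 0, and define X_t = cos(β_t)·R₀ + v ∫₀^t sin(β_t − β_s) ds and Y_t = sin(β_t)·R₀ − v ∫₀^t cos(β_t − β_s) ds for t ≥ 0. Then: (i) X_t ≤ R₀ + t v sin α for all t ≥ 0; (ii) −sin(α/2)·R₀ − t v ≤ Y_t ≤ sin(α/2)·R₀ − t v cos α for all t ≥ 0; and (iii) if t ≥ 0 is such that X_t tan α + Y_t > 0, then t ≤ d₂·R₀ / v. -/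
/-!
In the rotating frame the integrand `(sin(β_t − β_s), −cos(β_t − β_s))` is a unit vector within
angle `|β_t − β_s| ≤ α` of the downward vertical, so the sailed part of the position moves right
at rate at most `v sin α` and down at rate between `v cos α` and `v`; the rotated starting point
`R₀ (cos β_t, sin β_t)` contributes at most `R₀` horizontally and `±sin(α/2) R₀` vertically.
For (iii), multiply `X_t tan α + Y_t > 0` by `cos α`: the bounds make `X_t sin α + Y_t cos α`
at most `(sin α + sin(α/2) cos α) R₀ − t v cos 2α`, and `cos 2α > 0` as `α ≤ π/8`.
-/

open Real Set

lemma abs_sin_le_sin_of_abs_le {x a : ℝ} (h : |x| ≤ a) (ha : a ≤ π / 2) : |sin x| ≤ sin a := by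
  obtain ⟨hxa, hax⟩ := abs_le.mp h
  refine abs_le.mpr ⟨?_, sin_le_sin_of_le_of_le_pi_div_two (by linarith) ha hax⟩
  rw [← sin_neg]
  exact sin_le_sin_of_le_of_le_pi_div_two (by linarith) (by linarith) hxa

lemma cos_le_cos_of_abs_le {x a : ℝ} (h : |x| ≤ a) (ha : a ≤ π) : cos a ≤ cos x := by
  rw [← cos_abs x]
  exact cos_le_cos_of_nonneg_of_le_pi (abs_nonneg x) ha h

section IntervalIntegral

variable {f : ℝ → ℝ} {t C : ℝ}

lemma integral_le_mul_of_forall_le (ht : 0 ≤ t) (hf : IntervalIntegrable f MeasureTheory.volume 0 t)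
    (h : ∀ s ∈ Icc 0 t, f s ≤ C) : ∫ s in (0:ℝ)..t, f s ≤ t * C := by
  simpa using intervalIntegral.integral_mono_on ht hf intervalIntegrable_const h

lemma mul_le_integral_of_forall_le (ht : 0 ≤ t) (hf : IntervalIntegrable f MeasureTheory.volume 0 t)
    (h : ∀ s ∈ Icc 0 t, C ≤ f s) : t * C ≤ ∫ s in (0:ℝ)..t, f s := by
  simpa using intervalIntegral.integral_mono_on ht intervalIntegrable_const hf h

end IntervalIntegral

section Heading

variable {β : ℝ → ℝ} {t a : ℝ}

lemma integral_sin_sub_le (ht : 0 ≤ t) (hβ : Continuous β)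
    (h : ∀ s ∈ Icc 0 t, |β t - β s| ≤ a) (ha : a ≤ π / 2) :
    ∫ s in (0:ℝ)..t, sin (β t - β s) ≤ t * sin a :=
  integral_le_mul_of_forall_le ht
    ((by fun_prop : Continuous fun s => sin (β t - β s)).intervalIntegrable _ _)
    fun s hs => (le_abs_self _).trans (abs_sin_le_sin_of_abs_le (h s hs) ha)

lemma integral_cos_sub_le (ht : 0 ≤ t) (hβ : Continuous β) :
    ∫ s in (0:ℝ)..t, cos (β t - β s) ≤ t := by
  simpa using integral_le_mul_of_forall_le ht
    ((by fun_prop : Continuous fun s => cos (β t - β s)).intervalIntegrable _ _) fun s _ => cos_le_one (β t - β s)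

lemma mul_cos_le_integral_cos_sub (ht : 0 ≤ t) (hβ : Continuous β)
    (h : ∀ s ∈ Icc 0 t, |β t - β s| ≤ a) (ha : a ≤ π) :
    t * cos a ≤ ∫ s in (0:ℝ)..t, cos (β t - β s) :=
  mul_le_integral_of_forall_le ht
    ((by fun_prop : Continuous fun s => cos (β t - β s)).intervalIntegrable _ _)
    fun s hs => cos_le_cos_of_abs_le (h s hs) ha

end Heading

lemma mul_cos_two_mul_lt_of_tan_mul_add_pos {α x y A B w : ℝ} (hc : 0 < cos α)
    (hs : 0 ≤ sin α) (hx : x ≤ A + w * sin α) (hy : y ≤ B - w * cos α)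
    (h : 0 < x * tan α + y) : w * cos (2 * α) < A * sin α + B * cos α := by
  have hrot : 0 < x * sin α + y * cos α := by
    have := mul_pos h hc
    rwa [add_mul, mul_assoc, tan_mul_cos hc.ne'] at this
  rw [cos_two_mul']
  nlinarith [mul_le_mul_of_nonneg_right hx hs, mul_le_mul_of_nonneg_right hy hc.le]

/-- **Bounds for the second leg of the strategy, starting on the positive `x`-axis.**
A boat on starboard tack starting at `(R₀, 0)` in a wind whose direction `β` never
deviates by more than `α/2` satisfies `X_t ≤ R₀ + t v sin α`,
`−sin(α/2) R₀ − t v ≤ Y_t ≤ sin(α/2) R₀ − t v cos α`, and remains above the line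
`y = −x tan α` for at most time `d₂ R₀ / v`, where
`d₂ = (sin(α/2) + tan α) cos α / cos(2α)`. -/
theorem second_leg_bounds
    (α v R₀ : ℝ) (hα : α ∈ Set.Ioc 0 (π / 8)) (hv : 0 < v) (hR₀ : 0 < R₀)
    (d₂ : ℝ) (hd₂ : d₂ = (Real.sin (α / 2) + Real.tan α) * Real.cos α / Real.cos (2 * α))
    (β : ℝ → ℝ) (hβcont : Continuous β) (hβ : ∀ t : ℝ, 0 ≤ t → |β t| < α / 2)
    (X Y : ℝ → ℝ)
    (hX : ∀ t : ℝ, X t = Real.cos (β t) * R₀ + v * ∫ s in (0:ℝ)..t, Real.sin (β t - β s))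
    (hY : ∀ t : ℝ, Y t = Real.sin (β t) * R₀ - v * ∫ s in (0:ℝ)..t, Real.cos (β t - β s)) :
    (∀ t : ℝ, 0 ≤ t → X t ≤ R₀ + t * v * Real.sin α) ∧
    (∀ t : ℝ, 0 ≤ t →
      -Real.sin (α / 2) * R₀ - t * v ≤ Y t ∧ Y t ≤ Real.sin (α / 2) * R₀ - t * v * Real.cos α) ∧
    (∀ t : ℝ, 0 ≤ t → 0 < X t * Real.tan α + Y t → t ≤ d₂ * R₀ / v) := by
  obtain ⟨hα0, hα8⟩ := hα
  have hc : 0 < cos α := cos_pos_of_mem_Ioo ⟨by linarith [pi_pos], by linarith [pi_pos]⟩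
  have hs : 0 < sin α := sin_pos_of_pos_of_lt_pi hα0 (by linarith [pi_pos])
  have hc2 : 0 < cos (2 * α) := cos_pos_of_mem_Ioo ⟨by linarith [pi_pos], by linarith [pi_pos]⟩
  have hdiff : ∀ t, 0 ≤ t → ∀ s ∈ Icc 0 t, |β t - β s| ≤ α := fun t ht s hs => by
    linarith [abs_sub (β t) (β s), hβ t ht, hβ s hs.1]
  have hsinβ : ∀ t, 0 ≤ t → |sin (β t)| ≤ sin (α / 2) := fun t ht =>
    abs_sin_le_sin_of_abs_le (hβ t ht).le (by linarith [pi_pos])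
  have hX_le : ∀ t, 0 ≤ t → X t ≤ R₀ + t * v * sin α := fun t ht => by
    rw [hX t]
    nlinarith [cos_le_one (β t), integral_sin_sub_le ht hβcont (hdiff t ht) (by linarith [pi_pos])]
  have hY_bounds : ∀ t, 0 ≤ t →
      -sin (α / 2) * R₀ - t * v ≤ Y t ∧ Y t ≤ sin (α / 2) * R₀ - t * v * cos α := fun t ht => by
    have hlo := integral_cos_sub_le ht hβcont
    have hhi := mul_cos_le_integral_cos_sub ht hβcont (hdiff t ht) (by linarith [pi_pos])
    obtain ⟨hsin_lo, hsin_hi⟩ := abs_le.mp (hsinβ t ht)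
    rw [hY t]
    constructor <;> nlinarith
  refine ⟨hX_le, hY_bounds, fun t ht hpos => ?_⟩
  have hlt := mul_cos_two_mul_lt_of_tan_mul_add_pos hc hs.le (hX_le t ht) (hY_bounds t ht).2 hpos
  have hd₂_mul : d₂ * cos (2 * α) = sin (α / 2) * cos α + sin α := by
    rw [hd₂, div_mul_cancel₀ _ hc2.ne', add_mul, tan_mul_cos hc.ne']
  rw [le_div_iff₀ hv]
  nlinarith
end

section
/- Let v > 0, η > 0 and let n be a positive integer with 1/n < η. With μ₂* and φ_n defined as in the context, there exists a constant C ≥ 0 such that for all r > 0 and all θ₁, θ₂ ∈ ℝ: φ_n(r)·(θ₁ − θ₂)·(μ₂*(r,θ₁) − μ₂*(r,θ₂)) ≤ C·(θ₁ − θ₂)². -/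
open Real

/-- Reduce an angle to the base interval `[-π/4, 7π/4)`. -/
noncomputable def wrapBase (θ : ℝ) : ℝ := toIcoMod Real.two_pi_pos (-(π / 4)) θ

/-- Radial drift on starboard tack (`a = +1`), `2π`-periodic in `θ`. -/
noncomputable def mu1plus (v θ : ℝ) : ℝ :=
  if wrapBase θ < π / 2 then -v * Real.sin (wrapBase θ)
  else if wrapBase θ < π then -v
  else v * Real.cos (wrapBase θ)

/-- Angular drift on starboard tack (`a = +1`), `2π`-periodic in `θ`. -/
noncomputable def mu2plus (v r θ : ℝ) : ℝ :=
  if wrapBase θ < π / 2 then -v * Real.cos (wrapBase θ) / r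
  else if wrapBase θ < π then 0
  else -v * Real.sin (wrapBase θ) / r

/-- Radial drift on port tack (`a = −1`), `2π`-periodic in `θ`. -/
noncomputable def mu1minus (v θ : ℝ) : ℝ :=
  if wrapBase θ < 0 then -v
  else if wrapBase θ < 3 * π / 4 then -v * Real.cos (wrapBase θ)
  else if wrapBase θ < 3 * π / 2 then v * Real.sin (wrapBase θ)
  else -v

/-- Angular drift on port tack (`a = −1`), `2π`-periodic in `θ`. -/
noncomputable def mu2minus (v r θ : ℝ) : ℝ :=
  if wrapBase θ < 0 then 0
  else if wrapBase θ < 3 * π / 4 then v * Real.sin (wrapBase θ) / r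
  else if wrapBase θ < 3 * π / 2 then v * Real.cos (wrapBase θ) / r
  else 0

/-- Reduce an angle to the interval `[-3π/4, 5π/4)`. -/
noncomputable def wrapStar (θ : ℝ) : ℝ := toIcoMod Real.two_pi_pos (-(3 * π / 4)) θ

/-- Radial drift of the candidate optimal feedback strategy: starboard for
`θ ∈ [π/4, 5π/4)`, port for `θ ∈ [−3π/4, π/4)`, extended `2π`-periodically. -/
noncomputable def mu1star (v θ : ℝ) : ℝ :=
  if wrapStar θ < π / 4 then mu1minus v (wrapStar θ) else mu1plus v (wrapStar θ)

/-- Angular drift of the candidate optimal feedback strategy: starboard for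
`θ ∈ [π/4, 5π/4)`, port for `θ ∈ [−3π/4, π/4)`, extended `2π`-periodically. -/
noncomputable def mu2star (v r θ : ℝ) : ℝ :=
  if wrapStar θ < π / 4 then mu2minus v r (wrapStar θ) else mu2plus v r (wrapStar θ)

/-- The damping function `φ_n`: `0` on `[0, η − 1/n]`, linear on `(η − 1/n, η)`,
and `1` on `[η, ∞)`. -/
noncomputable def phiDamp (η : ℝ) (n : ℕ) (r : ℝ) : ℝ :=
  if r ≤ η - 1 / n then 0 else if r < η then n * (r - η) + 1 else 1

/-!
On `[-3π/4, 5π/4)` the feedback drift is `μ₂*(r, θ) = v · P θ / r`, where `P` is `π`-periodic and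
equals `-cos`, `0`, `-sin` on the consecutive pieces `[π/4, π/2]`, `[π/2, π]`, `[π, 5π/4)` of
its period. There `P` is continuous with slope in `[0, 1]`, so `θ ↦ θ - P θ` is monotone on the
period; at the period boundary `P` jumps down to its minimum, which keeps `θ ↦ θ - P θ` monotone on
all of `ℝ`. That monotonicity is `(θ₁ - θ₂) (P θ₁ - P θ₂) ≤ (θ₁ - θ₂)²`, and
`φ_n(r) / r ≤ 1 / (η - 1/n)` makes `C = v / (η - 1/n)` uniform in `r`.
-/

open Set Function

theorem Function.Periodic.monotone_mul_sub {g : ℝ → ℝ} {p c L : ℝ} (hp : 0 < p)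
    (hg : Periodic g p) (hL : 0 ≤ L)
    (hmono : MonotoneOn (fun x => L * x - g x) (Ico c (c + p)))
    (hmin : IsMinOn g (Ico c (c + p)) c) :
    Monotone (fun x => L * x - g x) := by
  have hc : c ∈ Ico c (c + p) := left_mem_Ico.2 (lt_add_of_pos_right c hp)
  have hshift (w : ℝ) (m : ℤ) :
      L * (w + m • p) - g (w + m • p) = L * w - g w + m * (L * p) := by
    rw [hg.zsmul m w, zsmul_eq_mul]
    ring
  intro x y hxy
  rw [← toIcoMod_add_toIcoDiv_zsmul hp c x, ← toIcoMod_add_toIcoDiv_zsmul hp c y] at hxy ⊢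
  have hx := toIcoMod_mem_Ico hp c x
  have hy := toIcoMod_mem_Ico hp c y
  generalize toIcoMod hp c x = a, toIcoDiv hp c x = m, toIcoMod hp c y = b,
    toIcoDiv hp c y = k at hx hy hxy
  simp only [hshift]
  rw [zsmul_eq_mul, zsmul_eq_mul] at hxy
  obtain ⟨ha₁, ha₂⟩ := hx
  obtain ⟨hb₁, hb₂⟩ := hy
  have hmk : m ≤ k := by
    have : (m : ℝ) * p < (k + 1) * p := by nlinarith
    exact Int.lt_add_one_iff.1 (by exact_mod_cast lt_of_mul_lt_mul_right this hp.le)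
  rcases hmk.lt_or_eq with hlt | rfl
  · have hmk' : (m : ℝ) + 1 ≤ k := by exact_mod_cast hlt
    have hga : g c ≤ g a := isMinOn_iff.1 hmin a ⟨ha₁, ha₂⟩
    have hLa : L * a ≤ L * (c + p) := mul_le_mul_of_nonneg_left ha₂.le hL
    have hcb : L * c - g c ≤ L * b - g b := hmono hc ⟨hb₁, hb₂⟩ hb₁
    nlinarith [mul_nonneg hL hp.le]
  · have hab : a ≤ b := by linarith
    linarith [hmono ⟨ha₁, ha₂⟩ ⟨hb₁, hb₂⟩ hab]

theorem Monotone.sub_mul_sub_le_mul_sq {g : ℝ → ℝ} {L : ℝ} (h : Monotone (fun x => L * x - g x))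
    (x y : ℝ) : (x - y) * (g x - g y) ≤ L * (x - y) ^ 2 := by
  have := (h.monovary monotone_id).sub_mul_sub_nonneg y x
  simp only [id] at this
  nlinarith

theorem Real.monotone_add_cos : Monotone (fun x => x + cos x) := fun x y hxy => by
  have := (le_abs_self _).trans (Real.abs_cos_sub_cos_le x y)
  rw [abs_sub_comm, abs_of_nonneg (sub_nonneg.2 hxy)] at this
  simp only
  linarith

theorem Real.monotone_add_sin : Monotone (fun x => x + sin x) := fun x y hxy => by
  have := (le_abs_self _).trans (Real.abs_sin_sub_sin_le x y)
  rw [abs_sub_comm, abs_of_nonneg (sub_nonneg.2 hxy)] at this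
  simp only
  linarith

noncomputable def starWindowProfile (w : ℝ) : ℝ :=
  if w < π / 2 then -cos w else if w < π then 0 else -sin w

theorem starWindowProfile_of_le_pi_div_two {w : ℝ} (hw : w ≤ π / 2) :
    starWindowProfile w = -cos w := by
  rcases hw.lt_or_eq with h | rfl
  · simp [starWindowProfile, h]
  · simp [starWindowProfile, pi_pos]

theorem starWindowProfile_of_mem_Icc {w : ℝ} (hw : w ∈ Icc (π / 2) π) :
    starWindowProfile w = 0 := by
  rcases hw.2.lt_or_eq with h | rfl
  · simp [starWindowProfile, h, not_lt.2 hw.1]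
  · simp [starWindowProfile, pi_pos.le]

theorem starWindowProfile_of_pi_le {w : ℝ} (hw : π ≤ w) : starWindowProfile w = -sin w := by
  have : ¬w < π / 2 := by linarith [pi_pos]
  simp [starWindowProfile, this, not_lt.2 hw]

theorem monotoneOn_sub_starWindowProfile :
    MonotoneOn (fun x => x - starWindowProfile x) (Ico (π / 4) (π / 4 + π)) := by
  have hπ := pi_pos
  have h₁ : MonotoneOn (fun x => x - starWindowProfile x) (Icc (π / 4) (π / 2)) :=
    (Real.monotone_add_cos.monotoneOn _).congr fun x hx => by
      simp [starWindowProfile_of_le_pi_div_two hx.2]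
  have h₂ : MonotoneOn (fun x => x - starWindowProfile x) (Icc (π / 2) π) :=
    (monotone_id.monotoneOn _).congr fun x hx => by simp [starWindowProfile_of_mem_Icc hx]
  have h₃ : MonotoneOn (fun x => x - starWindowProfile x) (Ico π (π / 4 + π)) :=
    (Real.monotone_add_sin.monotoneOn _).congr fun x hx => by
      simp [starWindowProfile_of_pi_le hx.1]
  have h₁₂ := h₁.union_right h₂ (isGreatest_Icc (by linarith)) (isLeast_Icc (by linarith))
  rw [Icc_union_Icc_eq_Icc (by linarith) (by linarith)] at h₁₂
  have h := h₁₂.union_right h₃ (isGreatest_Icc (by linarith)) (isLeast_Ico (by linarith))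
  rwa [Icc_union_Ico_eq_Ico (by linarith) (by linarith)] at h

theorem isMinOn_starWindowProfile :
    IsMinOn starWindowProfile (Ico (π / 4) (π / 4 + π)) (π / 4) := by
  have hπ := pi_pos
  have hcos : 0 < cos (π / 4) := cos_pos_of_mem_Ioo ⟨by linarith, by linarith⟩
  refine isMinOn_iff.2 fun w ⟨hw₁, hw₂⟩ => ?_
  simp only [starWindowProfile, if_pos (by linarith : π / 4 < π / 2)]
  split_ifs with h₁ h₂
  · exact neg_le_neg (cos_le_cos_of_nonneg_of_le_pi (by linarith) (by linarith) hw₁)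
  · linarith
  · have := sin_nonneg_of_nonneg_of_le_pi (x := w - π) (by linarith) (by linarith)
    rw [sin_sub_pi] at this
    linarith

noncomputable def starProfile (θ : ℝ) : ℝ := starWindowProfile (toIcoMod pi_pos (π / 4) θ)

theorem starProfile_periodic : Periodic starProfile π := fun θ => by
  simp only [starProfile, toIcoMod_add_right]

theorem starProfile_eqOn : EqOn starProfile starWindowProfile (Ico (π / 4) (π / 4 + π)) :=
  fun _ hw => congrArg starWindowProfile ((toIcoMod_eq_self _).2 hw)

theorem starProfile_of_mem_Ico {s : ℝ} (hs : s ∈ Ico (-(3 * π / 4)) (π / 4)) :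
    starProfile s = starWindowProfile (s + π) := by
  refine congrArg starWindowProfile ((toIcoMod_eq_iff _).2 ⟨⟨?_, ?_⟩, -1, by simp⟩)
  · linarith [hs.1]
  · linarith [hs.2]

theorem starProfile_sub_mul_sub_le_sq (x y : ℝ) :
    (x - y) * (starProfile x - starProfile y) ≤ (x - y) ^ 2 := by
  have hmono : MonotoneOn (fun x => 1 * x - starProfile x) (Ico (π / 4) (π / 4 + π)) := by
    simp only [one_mul]
    exact monotoneOn_sub_starWindowProfile.congr fun w hw => by simp only [starProfile_eqOn hw]
  have hmin : IsMinOn starProfile (Ico (π / 4) (π / 4 + π)) (π / 4) :=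
    isMinOn_iff.2 fun w hw => by
      rw [starProfile_eqOn hw, starProfile_eqOn (left_mem_Ico.2 (by linarith [pi_pos]))]
      exact isMinOn_iff.1 isMinOn_starWindowProfile w hw
  simpa only [one_mul] using
    (starProfile_periodic.monotone_mul_sub pi_pos zero_le_one hmono hmin).sub_mul_sub_le_mul_sq x y

theorem mu2plus_eq {v r s : ℝ} (hs : s ∈ Ico (π / 4) (π / 4 + π)) :
    mu2plus v r s = v * starProfile s / r := by
  have hπ := pi_pos
  have hwrap : wrapBase s = s := (toIcoMod_eq_self _).2 ⟨by linarith [hs.1], by linarith [hs.2]⟩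
  rw [starProfile_eqOn hs, mu2plus, hwrap, starWindowProfile]
  split_ifs <;> ring

theorem mu2minus_eq {v r s : ℝ} (hs : s ∈ Ico (-(3 * π / 4)) (π / 4)) :
    mu2minus v r s = v * starProfile s / r := by
  obtain ⟨hs₁, hs₂⟩ := hs
  have hπ := pi_pos
  rw [starProfile_of_mem_Ico ⟨hs₁, hs₂⟩, mu2minus]
  rcases le_or_gt (-(π / 4)) s with h | h
  · have hwrap : wrapBase s = s := (toIcoMod_eq_self _).2 ⟨h, by linarith⟩
    rw [hwrap, starWindowProfile]
    split_ifs <;> first | linarith | simp [sin_add_pi]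
  · have hwrap : wrapBase s = s + 2 * π :=
      (toIcoMod_eq_iff _).2 ⟨⟨by linarith, by linarith⟩, -1, by simp⟩
    rw [hwrap, starWindowProfile]
    split_ifs <;> first | linarith | simp [cos_add_pi]

theorem mu2star_eq (v r θ : ℝ) : mu2star v r θ = v * starProfile θ / r := by
  have hπ := pi_pos
  have hperiod : starProfile (wrapStar θ) = starProfile θ := by
    have h2π : Periodic starProfile (2 * π) := by simpa using starProfile_periodic.nat_mul 2
    rw [wrapStar, ← self_sub_toIcoDiv_zsmul, h2π.sub_zsmul_eq]
  obtain ⟨hs₁, hs₂⟩ : wrapStar θ ∈ Ico (-(3 * π / 4)) (-(3 * π / 4) + 2 * π) :=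
    toIcoMod_mem_Ico _ _ _
  rw [← hperiod, mu2star]
  split_ifs with h
  · exact mu2minus_eq ⟨hs₁, h⟩
  · exact mu2plus_eq ⟨not_lt.1 h, by linarith⟩

theorem phiDamp_nonneg (η : ℝ) (n : ℕ) (r : ℝ) : 0 ≤ phiDamp η n r := by
  unfold phiDamp
  split_ifs with h₁ h₂
  · exact le_rfl
  · rcases n.eq_zero_or_pos with rfl | hn
    · simp only [Nat.cast_zero, div_zero, sub_zero] at h₁
      linarith
    · have hn' : (0 : ℝ) < n := by exact_mod_cast hn
      have : (n : ℝ) * (η - r) ≤ n * (1 / n) := by gcongr; linarith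
      rw [mul_one_div_cancel hn'.ne'] at this
      linarith
  · exact zero_le_one

theorem phiDamp_le_one (η : ℝ) (n : ℕ) (r : ℝ) : phiDamp η n r ≤ 1 := by
  unfold phiDamp
  split_ifs with h₁ h₂
  · exact zero_le_one
  · nlinarith [(Nat.cast_nonneg n : (0 : ℝ) ≤ n)]
  · exact le_rfl

theorem phiDamp_div_le {η r : ℝ} {n : ℕ} (hnη : 1 / (n : ℝ) < η) (hr : 0 < r) :
    phiDamp η n r / r ≤ 1 / (η - 1 / n) := by
  rcases le_or_gt r (η - 1 / n) with h | h
  · rw [phiDamp, if_pos h, zero_div]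
    exact one_div_nonneg.2 (by linarith)
  · calc phiDamp η n r / r ≤ 1 / r := by gcongr; exact phiDamp_le_one η n r
      _ ≤ 1 / (η - 1 / n) := by gcongr

theorem angular_drift_one_sided_estimate_general
    (v η : ℝ) (hv : 0 < v) (n : ℕ) (hnη : 1 / (n : ℝ) < η) :
    ∃ C : ℝ, 0 ≤ C ∧ ∀ r θ₁ θ₂ : ℝ, 0 < r →
      phiDamp η n r * ((θ₁ - θ₂) * (mu2star v r θ₁ - mu2star v r θ₂))
        ≤ C * (θ₁ - θ₂) ^ 2 := by
  refine ⟨v / (η - 1 / n), div_nonneg hv.le (by linarith), fun r θ₁ θ₂ hr => ?_⟩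
  have hfactor : phiDamp η n r * ((θ₁ - θ₂) * (mu2star v r θ₁ - mu2star v r θ₂)) =
      phiDamp η n r / r * v * ((θ₁ - θ₂) * (starProfile θ₁ - starProfile θ₂)) := by
    rw [mu2star_eq, mu2star_eq]
    ring
  have hcoeff : 0 ≤ phiDamp η n r / r * v :=
    mul_nonneg (div_nonneg (phiDamp_nonneg η n r) hr.le) hv.le
  calc _ = phiDamp η n r / r * v * ((θ₁ - θ₂) * (starProfile θ₁ - starProfile θ₂)) := hfactor
    _ ≤ phiDamp η n r / r * v * (θ₁ - θ₂) ^ 2 :=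
      mul_le_mul_of_nonneg_left (starProfile_sub_mul_sub_le_sq θ₁ θ₂) hcoeff
    _ ≤ 1 / (η - 1 / n) * v * (θ₁ - θ₂) ^ 2 :=
      mul_le_mul_of_nonneg_right (mul_le_mul_of_nonneg_right (phiDamp_div_le hnη hr) hv.le)
        (sq_nonneg _)
    _ = v / (η - 1 / n) * (θ₁ - θ₂) ^ 2 := by ring

/-- **One-sided quadratic estimate in the angular variable.**
Although `θ ↦ μ₂*(r,θ)` is discontinuous at the points `π/4 + kπ`, the damped
angular drift satisfies a one-sided quadratic estimate uniformly in `r`, because at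
each discontinuity the jump has the favorable sign. -/
theorem angular_drift_one_sided_estimate
    (v η : ℝ) (hv : 0 < v) (hη : 0 < η) (n : ℕ) (hn : 0 < n) (hnη : 1 / (n : ℝ) < η) :
    ∃ C : ℝ, 0 ≤ C ∧ ∀ r θ₁ θ₂ : ℝ, 0 < r →
      phiDamp η n r * ((θ₁ - θ₂) * (mu2star v r θ₁ - mu2star v r θ₂))
        ≤ C * (θ₁ - θ₂) ^ 2 :=
  angular_drift_one_sided_estimate_general v η hv n hnη
end
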